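/- arXiv:1610.02541 — 3 statements merged into one kernel-verified Lean document; each statement's English description precedes it below -/
import Mathlib

section
/- Let ζ ∈ ℂ be a primitive 5th root of unity. For y ∈ ℂ^{ℤ/5}, let M_y(x) be the 5×5 matrix with entries (M_y(x))_{i,j} = x_{i+j} · y_{i-j} for i, j ∈ ℤ/5 (indices mod 5), where x_0, …, x_4 are indeterminates. Then for every y ∈ ℂ^{ℤ/5}, the determinant det(M_y(x)), viewed as a polynomial in ℂ[x_0, …, x_4], is a homogeneous polynomial of degree 5 that is H_5-invariant: it is unchanged under the substitutions x_i ↦ x_{i+1} and x_i ↦ ζ^i x_i. -/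
open MvPolynomial

set_option maxRecDepth 4000 in
/-- For every `y ∈ ℂ^{ℤ/5}`, the determinant of the Moore matrix
`M_y(x) = (x_{i+j} · y_{i-j})_{i,j ∈ ℤ/5}` is a homogeneous polynomial of degree 5 in
`ℂ[x₀,…,x₄]` which is H₅-invariant, i.e. fixed by the substitutions `xᵢ ↦ xᵢ₊₁` and
`xᵢ ↦ ζ^i · xᵢ` (ζ a primitive 5th root of unity). -/
theorem stmt_5 (ζ : ℂ) (hζ : IsPrimitiveRoot ζ 5)
    (σ τ : MvPolynomial (ZMod 5) ℂ →ₐ[ℂ] MvPolynomial (ZMod 5) ℂ)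
    (hσ : σ = rename (fun i : ZMod 5 => i + 1))
    (hτ : τ = aeval (fun i : ZMod 5 => (ζ ^ i.val) • X i))
    (y : ZMod 5 → ℂ)
    (M : Matrix (ZMod 5) (ZMod 5) (MvPolynomial (ZMod 5) ℂ))
    (hM : ∀ i j : ZMod 5, M i j = X (i + j) * C (y (i - j))) :
    M.det ∈ homogeneousSubmodule (ZMod 5) ℂ 5 ∧ σ M.det = M.det ∧ τ M.det = M.det := by
  have h5 : ζ ^ 5 = 1 := hζ.pow_eq_one
  refine ⟨?_, ?_, ?_⟩
  · rw [Matrix.det_apply]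
    refine Submodule.sum_mem _ fun p _ => ?_
    have hprod : (∏ i : ZMod 5, M (p i) i) ∈ homogeneousSubmodule (ZMod 5) ℂ 5 := by
      rw [mem_homogeneousSubmodule]
      have h := IsHomogeneous.prod Finset.univ (fun i => M (p i) i) (fun _ => 1)
        (fun i _ => by
          show (M (p i) i).IsHomogeneous 1
          rw [hM]
          simpa using (isHomogeneous_X ℂ (p i + i)).mul (isHomogeneous_C _ (y (p i - i))))
      simpa using h
    rcases Int.units_eq_one_or (Equiv.Perm.sign p) with h | h <;> rw [h]
    · simpa using hprod
    · rw [Units.smul_def]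
      simpa using Submodule.neg_mem _ hprod
  · rw [σ.map_det]
    have hmat : σ.mapMatrix M
        = M.submatrix (Equiv.addRight (3 : ZMod 5)) (Equiv.addRight (3 : ZMod 5)) := by
      funext i j
      have e1 : i + 3 + (j + 3) = i + j + 1 := by
        have h : i + 3 + (j + 3) = i + j + 6 := by ring
        rw [h, show (6 : ZMod 5) = 1 from by decide]
      have e2 : i + 3 - (j + 3) = i - j := by ring
      simp only [AlgHom.mapMatrix_apply, Matrix.map_apply, Matrix.submatrix_apply, hM, hσ,
        map_mul, rename_X, rename_C, Equiv.coe_addRight, e1, e2]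
    rw [hmat]
    exact Matrix.det_submatrix_equiv_self (Equiv.addRight (3 : ZMod 5)) M
  · rw [τ.map_det]
    have hτM : τ.mapMatrix M =
        Matrix.of fun i j => C (ζ ^ i.val) * (Matrix.of fun i j => C (ζ ^ j.val) * M i j) i j := by
      funext i j
      have hpow : ζ ^ i.val * ζ ^ j.val = ζ ^ (i + j).val := by
        rw [← pow_add, show i.val + j.val = (i + j).val + 5 * ((i.val + j.val) / 5) from by
          rw [ZMod.val_add]; exact (Nat.mod_add_div _ _).symm, pow_add, pow_mul, h5, one_pow,
          mul_one]
      simp only [AlgHom.mapMatrix_apply, Matrix.map_apply, Matrix.of_apply, hM, hτ,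
        map_mul, aeval_X, aeval_C, algebraMap_eq, smul_eq_C_mul]
      rw [← hpow, C_mul]
      ring
    have hprod : (∏ i : ZMod 5, (C (ζ ^ i.val) : MvPolynomial (ZMod 5) ℂ)) = 1 := by
      rw [← map_prod, Finset.prod_pow_eq_pow_sum]
      have h10 : ∑ i : ZMod 5, i.val = 10 := by decide
      rw [h10, show (10 : ℕ) = 5 * 2 from rfl, pow_mul, h5, one_pow, map_one]
    rw [hτM, Matrix.det_mul_column, Matrix.det_mul_row, hprod, one_mul, one_mul]
end

section
/- Let ζ ∈ ℂ be a primitive 6th root of unity and consider the polynomial ring ℂ[x_0, …, x_5] with variables indexed by ℤ/6. Define f_0 = x_0³ + x_2³ + x_4³, f_1 = x_1²x_4 + x_3²x_0 + x_5²x_2, f_2 = x_1x_2x_3 + x_3x_4x_5 + x_5x_0x_1, f_3 = x_0x_2x_4, and let g_i (for i = 0, 1, 2, 3) be the polynomial obtained from f_i by the substitution x_j ↦ x_{j+1} (indices mod 6). Then the ℂ-vector space of homogeneous cubic polynomials invariant under both substitutions x_j ↦ x_{j+2} and x_j ↦ ζ^{2j} x_j (indices mod 6) is exactly the span of {f_0,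 f_1, f_2, f_3, g_0, g_1, g_2, g_3}, and these eight polynomials are linearly independent; in particular this space has dimension 8. -/
/-!
Both substitutions act on monomials: `x_j ↦ x_{j+2}` permutes them, and `x_j ↦ ζ^{2j} x_j`
scales `x_a x_b x_c` by `ζ^{2(a+b+c)}`. Hence a cubic is invariant iff its coefficients vanish
off the monomials with `3 ∣ a + b + c` and are constant along the orbits of `j ↦ j + 2` on
these. There are twenty such monomials in eight orbits, whose orbit sums are the `f_i` and `g_i`.
Reading off the coefficients at one representative per orbit is injective on invariant cubics
and sends the orbit sums to the standard basis of `ℂ⁸`; this gives independence, the dimension,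
and the span.
-/

open MvPolynomial

section General

variable {σ R : Type*} [CommSemiring R]

theorem Multiset.toFinsupp_map {τ : Type*} [DecidableEq σ] [DecidableEq τ] (e : σ → τ)
    (t : Multiset σ) :
    Multiset.toFinsupp (t.map e) = Finsupp.mapDomain e (Multiset.toFinsupp t) := by
  rw [← Multiset.toFinsupp_toMultiset t, Finsupp.toMultiset_map, Multiset.toFinsupp_toMultiset,
    Finsupp.toMultiset_toFinsupp]

theorem Multiset.degree_toFinsupp [DecidableEq σ] (t : Multiset σ) :
    (Multiset.toFinsupp t).degree = Multiset.card t :=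
  Multiset.toFinsupp_sum_eq t

theorem MvPolynomial.prod_map_X_eq_monomial [DecidableEq σ] (t : Multiset σ) :
    (t.map X).prod = monomial (Multiset.toFinsupp t) (1 : R) := by
  induction t using Multiset.induction with
  | empty => simp
  | cons a t ih =>
    rw [Multiset.map_cons, Multiset.prod_cons, ih, ← Multiset.singleton_add,
      Multiset.toFinsupp_add, Multiset.toFinsupp_singleton, monomial_single_add, pow_one]

theorem MvPolynomial.coeff_sum_prod_map_X [DecidableEq σ] (S : Finset (Multiset σ))
    (t : Multiset σ) :
    coeff (Multiset.toFinsupp t) (∑ u ∈ S, (u.map X).prod : MvPolynomial σ R) =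
      if t ∈ S then 1 else 0 := by
  simp only [prod_map_X_eq_monomial, coeff_sum, coeff_monomial,
    Multiset.toFinsupp.injective.eq_iff]
  exact Finset.sum_ite_eq' S t _

theorem MvPolynomial.aeval_smul_X_prod_map_X (c : σ → R) (t : Multiset σ) :
    aeval (fun j => c j • (X j : MvPolynomial σ R)) ((t.map X).prod : MvPolynomial σ R) =
      (t.map c).prod • (t.map X).prod := by
  induction t using Multiset.induction with
  | empty => simp
  | cons a t ih =>
    simp only [Multiset.map_cons, Multiset.prod_cons, map_mul, aeval_X, ih, smul_mul_smul_comm]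

theorem MvPolynomial.coeff_aeval_smul_X (c : σ → R) (p : MvPolynomial σ R) (s : σ →₀ ℕ) :
    coeff s (aeval (fun j => c j • X j) p) = (s.toMultiset.map c).prod * coeff s p := by
  classical
  induction p using MvPolynomial.induction_on' with
  | monomial u r =>
    rw [← mul_one r, ← smul_eq_mul, ← smul_monomial, ← Finsupp.toMultiset_toFinsupp u,
      ← prod_map_X_eq_monomial, map_smul, aeval_smul_X_prod_map_X, prod_map_X_eq_monomial]
    simp only [coeff_smul, coeff_monomial, Finsupp.toMultiset_toFinsupp]
    split_ifs with h <;> simp [h, mul_comm]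
  | add p q hp hq => simp only [map_add, coeff_add, hp, hq, mul_add]

theorem MvPolynomial.coeff_eq_zero_of_aeval_smul_X_eq_self [IsDomain R] {c : σ → R}
    {p : MvPolynomial σ R} (hp : aeval (fun j => c j • X j) p = p) {s : σ →₀ ℕ}
    (hs : (s.toMultiset.map c).prod ≠ 1) : coeff s p = 0 := by
  by_contra hne
  have h := coeff_aeval_smul_X c p s
  rw [hp] at h
  exact hs (mul_right_cancel₀ hne (h.symm.trans (one_mul _).symm))

end General

section InvariantCubics

variable {R : Type*} [CommSemiring R]

/- A cubic monomial `x_a x_b x_c` is encoded by the multiset `{a, b, c}` of its indices.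
Being a `Finset`, the orbit of the fixed monomial `x₀ x₂ x₄` is a singleton, so `orbitSum`
counts it once. -/
def shiftOrbit (u : Multiset (ZMod 6)) : Finset (Multiset (ZMod 6)) :=
  {u, u.map (· + 2), u.map (· + 4)}

noncomputable def orbitSum (u : Multiset (ZMod 6)) : MvPolynomial (ZMod 6) ℂ :=
  ∑ t ∈ shiftOrbit u, (t.map X).prod

def cubicOrbitRep : Fin 8 → Multiset (ZMod 6) :=
  ![{0, 0, 0}, {1, 1, 4}, {1, 2, 3}, {0, 2, 4}, {1, 1, 1}, {2, 2, 5}, {2, 3, 4}, {1, 3, 5}]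

def indexSum (t : Multiset (ZMod 6)) : ℕ := (t.map ZMod.val).sum

noncomputable def invariantCubics (ζ : ℂ) : Submodule ℂ (MvPolynomial (ZMod 6) ℂ) :=
  homogeneousSubmodule (ZMod 6) ℂ 3 ⊓
    LinearMap.eqLocus (rename fun j : ZMod 6 => j + 2).toLinearMap LinearMap.id ⊓
    LinearMap.eqLocus (aeval fun j : ZMod 6 => (ζ ^ (2 * j.val)) • X j).toLinearMap LinearMap.id

theorem mem_invariantCubics {ζ : ℂ} {p : MvPolynomial (ZMod 6) ℂ} :
    p ∈ invariantCubics ζ ↔ p.IsHomogeneous 3 ∧ rename (fun j : ZMod 6 => j + 2) p = p ∧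
      aeval (fun j : ZMod 6 => (ζ ^ (2 * j.val)) • X j) p = p := by
  simp only [invariantCubics, Submodule.mem_inf, mem_homogeneousSubmodule, LinearMap.mem_eqLocus,
    AlgHom.toLinearMap_apply, LinearMap.id_coe, id_eq, and_assoc]

theorem shiftOrbit_map_add (a : ZMod 6) (u : Multiset (ZMod 6)) :
    shiftOrbit (u.map (· + a)) = (shiftOrbit u).image (Multiset.map (· + a)) := by
  simp only [shiftOrbit, Finset.image_insert, Finset.image_singleton, Multiset.map_map,
    Function.comp_def, add_right_comm]

theorem shiftOrbit_map_add_two (u : Multiset (ZMod 6)) :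
    shiftOrbit (u.map (· + 2)) = shiftOrbit u := by
  have h4 : (2 : ZMod 6) + 2 = 4 := rfl
  have h0 : (2 : ZMod 6) + 4 = 0 := rfl
  ext t
  simp only [shiftOrbit, Multiset.map_map, Function.comp_def, add_assoc, h4, h0, add_zero,
    Multiset.map_id', Finset.mem_insert, Finset.mem_singleton]
  tauto

theorem rename_add_orbitSum (a : ZMod 6) (u : Multiset (ZMod 6)) :
    rename (· + a) (orbitSum u) = orbitSum (u.map (· + a)) := by
  rw [orbitSum, orbitSum, shiftOrbit_map_add, Finset.sum_image
    fun _ _ _ _ h => Multiset.map_injective (add_left_injective a) h]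
  simp only [map_sum, map_multiset_prod, Multiset.map_map, Function.comp_def, rename_X]

theorem coeff_map_add_two_of_rename_eq {p : MvPolynomial (ZMod 6) R}
    (hp : rename (· + 2) p = p) (t : Multiset (ZMod 6)) :
    coeff (Multiset.toFinsupp (t.map (· + 2))) p = coeff (Multiset.toFinsupp t) p := by
  conv_lhs => rw [← hp]
  rw [Multiset.toFinsupp_map]
  exact coeff_rename_mapDomain _ (add_left_injective 2) p _

theorem coeff_eq_of_mem_shiftOrbit {p : MvPolynomial (ZMod 6) R} (hp : rename (· + 2) p = p)
    {t u : Multiset (ZMod 6)} (ht : t ∈ shiftOrbit u) :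
    coeff (Multiset.toFinsupp t) p = coeff (Multiset.toFinsupp u) p := by
  have h4 : u.map (· + 4) = (u.map (· + 2)).map (· + 2) := by
    rw [Multiset.map_map, Function.comp_def]; simp only [add_assoc]; rfl
  simp only [shiftOrbit, Finset.mem_insert, Finset.mem_singleton] at ht
  rcases ht with rfl | rfl | rfl
  · rfl
  · exact coeff_map_add_two_of_rename_eq hp u
  · rw [h4, coeff_map_add_two_of_rename_eq hp, coeff_map_add_two_of_rename_eq hp]

theorem prod_map_pow_two_mul_val {M : Type*} [CommMonoid M] (ζ : M) (t : Multiset (ZMod 6)) :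
    (t.map fun j => ζ ^ (2 * j.val)).prod = ζ ^ (2 * indexSum t) := by
  induction t using Multiset.induction with
  | empty => simp [indexSum]
  | cons a t ih => simp only [Multiset.map_cons, Multiset.prod_cons, ih, indexSum,
      Multiset.sum_cons, mul_add, pow_add]

theorem aeval_prod_map_X_of_three_dvd_indexSum {ζ : R} (hζ : ζ ^ 6 = 1)
    {t : Multiset (ZMod 6)} (ht : 3 ∣ indexSum t) :
    aeval (fun j : ZMod 6 => (ζ ^ (2 * j.val)) • (X j : MvPolynomial (ZMod 6) R))
      ((t.map X).prod : MvPolynomial (ZMod 6) R) = (t.map X).prod := by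
  obtain ⟨k, hk⟩ := ht
  rw [aeval_smul_X_prod_map_X, prod_map_pow_two_mul_val, hk, show 2 * (3 * k) = 6 * k by ring,
    pow_mul, hζ, one_pow, one_smul]

theorem coeff_eq_zero_of_not_three_dvd_indexSum [IsDomain R] {ζ : R} (hζ : IsPrimitiveRoot ζ 6)
    {p : MvPolynomial (ZMod 6) R} (hp : aeval (fun j : ZMod 6 => (ζ ^ (2 * j.val)) • X j) p = p)
    {t : Multiset (ZMod 6)} (ht : ¬ 3 ∣ indexSum t) : coeff (Multiset.toFinsupp t) p = 0 := by
  refine coeff_eq_zero_of_aeval_smul_X_eq_self hp ?_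
  rw [Multiset.toFinsupp_toMultiset, prod_map_pow_two_mul_val, Ne, hζ.pow_eq_one_iff_dvd]
  omega

theorem card_and_indexSum_of_mem_shiftOrbit_cubicOrbitRep :
    ∀ i, ∀ t ∈ shiftOrbit (cubicOrbitRep i), Multiset.card t = 3 ∧ 3 ∣ indexSum t := by
  decide

theorem cubicOrbitRep_mem_shiftOrbit_iff :
    ∀ i j, cubicOrbitRep i ∈ shiftOrbit (cubicOrbitRep j) ↔ i = j := by
  decide

theorem exists_mem_shiftOrbit_cubicOrbitRep {t : Multiset (ZMod 6)}
    (hcard : Multiset.card t = 3) (ht : 3 ∣ indexSum t) :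
    ∃ i, t ∈ shiftOrbit (cubicOrbitRep i) := by
  have key : ∀ a b c : ZMod 6, 3 ∣ indexSum {a, b, c} →
      ∃ i, {a, b, c} ∈ shiftOrbit (cubicOrbitRep i) := by
    decide
  obtain ⟨a, b, c, rfl⟩ := Multiset.card_eq_three.mp hcard
  exact key a b c ht

theorem cubicOrbitRep_castAdd_map_add_one : ∀ i : Fin 4,
    (cubicOrbitRep (Fin.castAdd 4 i)).map (· + 1) = cubicOrbitRep (Fin.natAdd 4 i) := by
  decide

theorem shiftOrbit_cubicOrbitRep_castAdd : ∀ i : Fin 4,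
    shiftOrbit (cubicOrbitRep (Fin.castAdd 4 i)) =
      ![{{0, 0, 0}, {2, 2, 2}, {4, 4, 4}}, {{1, 1, 4}, {3, 3, 0}, {5, 5, 2}},
        {{1, 2, 3}, {3, 4, 5}, {5, 0, 1}}, {{0, 2, 4}}] i := by
  decide

theorem orbitSum_cubicOrbitRep_castAdd (i : Fin 4) :
    orbitSum (cubicOrbitRep (Fin.castAdd 4 i)) =
      ![X 0 ^ 3 + X 2 ^ 3 + X 4 ^ 3, X 1 ^ 2 * X 4 + X 3 ^ 2 * X 0 + X 5 ^ 2 * X 2,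
        X 1 * X 2 * X 3 + X 3 * X 4 * X 5 + X 5 * X 0 * X 1, X 0 * X 2 * X 4] i := by
  rw [orbitSum, shiftOrbit_cubicOrbitRep_castAdd]
  fin_cases i <;>
    simp (config := { decide := true }) only [Fin.isValue, Fin.zero_eta, Fin.mk_one,
      Fin.reduceFinMk, Matrix.cons_val, Finset.mem_insert, Finset.mem_singleton, Finset.sum_insert,
      Finset.sum_singleton, not_false_eq_true, Multiset.insert_eq_cons, Multiset.map_cons,
      Multiset.map_singleton, Multiset.prod_cons, Multiset.prod_singleton] <;>
    ring

theorem orbitSum_mem_invariantCubics {ζ : ℂ} (hζ : ζ ^ 6 = 1) (i : Fin 8) :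
    orbitSum (cubicOrbitRep i) ∈ invariantCubics ζ := by
  have hcubic := card_and_indexSum_of_mem_shiftOrbit_cubicOrbitRep i
  refine mem_invariantCubics.mpr ⟨?_, ?_, ?_⟩
  · refine IsHomogeneous.sum _ _ _ fun t ht => ?_
    rw [prod_map_X_eq_monomial]
    exact isHomogeneous_monomial _ ((Multiset.degree_toFinsupp t).trans (hcubic t ht).1)
  · rw [rename_add_orbitSum, orbitSum, orbitSum, shiftOrbit_map_add_two]
  · rw [orbitSum, map_sum]
    exact Finset.sum_congr rfl fun t ht =>
      aeval_prod_map_X_of_three_dvd_indexSum hζ (hcubic t ht).2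

theorem eq_zero_of_mem_invariantCubics {ζ : ℂ} (hζ : IsPrimitiveRoot ζ 6)
    {p : MvPolynomial (ZMod 6) ℂ} (hp : p ∈ invariantCubics ζ)
    (h : ∀ i, coeff (Multiset.toFinsupp (cubicOrbitRep i)) p = 0) : p = 0 := by
  obtain ⟨hhom, hσ, hτ⟩ := mem_invariantCubics.mp hp
  ext s
  rw [coeff_zero, ← Finsupp.toMultiset_toFinsupp s]
  set t := Finsupp.toMultiset s
  by_cases hcard : Multiset.card t = 3
  · by_cases ht : 3 ∣ indexSum t
    · obtain ⟨i, hi⟩ := exists_mem_shiftOrbit_cubicOrbitRep hcard ht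
      rw [coeff_eq_of_mem_shiftOrbit hσ hi, h i]
    · exact coeff_eq_zero_of_not_three_dvd_indexSum hζ hτ ht
  · exact hhom.coeff_eq_zero (by rwa [Multiset.degree_toFinsupp])

noncomputable def cubicOrbitCoeffs : MvPolynomial (ZMod 6) ℂ →ₗ[ℂ] Fin 8 → ℂ :=
  LinearMap.pi fun i => lcoeff ℂ (Multiset.toFinsupp (cubicOrbitRep i))

theorem cubicOrbitCoeffs_orbitSum (i : Fin 8) :
    cubicOrbitCoeffs (orbitSum (cubicOrbitRep i)) = Pi.single i 1 := by
  ext j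
  simp only [cubicOrbitCoeffs, LinearMap.pi_apply, lcoeff_apply, orbitSum, coeff_sum_prod_map_X,
    cubicOrbitRep_mem_shiftOrbit_iff, Pi.single_apply]

theorem linearIndependent_orbitSum_cubicOrbitRep :
    LinearIndependent ℂ fun i => orbitSum (cubicOrbitRep i) :=
  LinearIndependent.of_comp cubicOrbitCoeffs <| by
    simpa only [Function.comp_def, cubicOrbitCoeffs_orbitSum]
      using Pi.linearIndependent_single_one (Fin 8) ℂ

theorem injective_cubicOrbitCoeffs_domRestrict {ζ : ℂ} (hζ : IsPrimitiveRoot ζ 6) :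
    Function.Injective (cubicOrbitCoeffs.domRestrict (invariantCubics ζ)) :=
  (injective_iff_map_eq_zero _).mpr fun p hp =>
    Subtype.ext <| eq_zero_of_mem_invariantCubics hζ p.2 fun i => congr_fun hp i

theorem span_orbitSum_cubicOrbitRep {ζ : ℂ} (hζ : IsPrimitiveRoot ζ 6) :
    Submodule.span ℂ (Set.range fun i => orbitSum (cubicOrbitRep i)) = invariantCubics ζ := by
  have hinj := injective_cubicOrbitCoeffs_domRestrict hζ
  have : FiniteDimensional ℂ (invariantCubics ζ) := Module.Finite.of_injective _ hinj
  refine Submodule.eq_of_le_of_finrank_le (Submodule.span_le.mpr ?_) ?_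
  · rintro _ ⟨i, rfl⟩
    exact orbitSum_mem_invariantCubics hζ.pow_eq_one i
  · rw [finrank_span_eq_card linearIndependent_orbitSum_cubicOrbitRep]
    simpa using LinearMap.finrank_le_finrank_of_injective hinj

theorem finrank_invariantCubics {ζ : ℂ} (hζ : IsPrimitiveRoot ζ 6) :
    Module.finrank ℂ (invariantCubics ζ) = 8 := by
  rw [← span_orbitSum_cubicOrbitRep hζ,
    finrank_span_eq_card linearIndependent_orbitSum_cubicOrbitRep, Fintype.card_fin]

end InvariantCubics

/-- Over `ℂ[x₀,…,x₅]` (variables indexed by `ℤ/6`, ζ a primitive 6th root of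
unity), the space of homogeneous cubics invariant under both substitutions `x_j ↦ x_{j+2}`
and `x_j ↦ ζ^{2j} x_j` equals the span of `f₀, f₁, f₂, f₃, g₀, g₁, g₂, g₃` (where
`g_i = σ f_i` is obtained by the shift `x_j ↦ x_{j+1}`), these eight cubics are linearly
independent, and the space has dimension 8. -/
theorem stmt_10 (ζ : ℂ) (hζ : IsPrimitiveRoot ζ 6)
    (σ2 τ2 : MvPolynomial (ZMod 6) ℂ →ₐ[ℂ] MvPolynomial (ZMod 6) ℂ)
    (hσ2 : σ2 = rename (fun j : ZMod 6 => j + 2))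
    (hτ2 : τ2 = aeval (fun j : ZMod 6 => (ζ ^ (2 * j.val)) • X j))
    (f g : Fin 4 → MvPolynomial (ZMod 6) ℂ)
    (hf0 : f 0 = X 0 ^ 3 + X 2 ^ 3 + X 4 ^ 3)
    (hf1 : f 1 = X 1 ^ 2 * X 4 + X 3 ^ 2 * X 0 + X 5 ^ 2 * X 2)
    (hf2 : f 2 = X 1 * X 2 * X 3 + X 3 * X 4 * X 5 + X 5 * X 0 * X 1)
    (hf3 : f 3 = X 0 * X 2 * X 4)
    (hg : ∀ i, g i = rename (fun j : ZMod 6 => j + 1) (f i)) :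
    (homogeneousSubmodule (ZMod 6) ℂ 3 ⊓
        LinearMap.eqLocus σ2.toLinearMap LinearMap.id ⊓
        LinearMap.eqLocus τ2.toLinearMap LinearMap.id
      = Submodule.span ℂ {f 0, f 1, f 2, f 3, g 0, g 1, g 2, g 3}) ∧
    LinearIndependent ℂ ![f 0, f 1, f 2, f 3, g 0, g 1, g 2, g 3] ∧
    Module.finrank ℂ
      ↥(homogeneousSubmodule (ZMod 6) ℂ 3 ⊓
        LinearMap.eqLocus σ2.toLinearMap LinearMap.id ⊓
        LinearMap.eqLocus τ2.toLinearMap LinearMap.id) = 8 := by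
  subst hσ2 hτ2
  have hf' (i : Fin 4) : f i = orbitSum (cubicOrbitRep (Fin.castAdd 4 i)) := by
    rw [orbitSum_cubicOrbitRep_castAdd]
    fin_cases i <;> assumption
  have hg' (i : Fin 4) : g i = orbitSum (cubicOrbitRep (Fin.natAdd 4 i)) := by
    rw [hg, hf', rename_add_orbitSum, cubicOrbitRep_castAdd_map_add_one]
  have hbasis :
      ![f 0, f 1, f 2, f 3, g 0, g 1, g 2, g 3] = fun i => orbitSum (cubicOrbitRep i) := by
    funext i
    fin_cases i <;> simp [hf', hg']
  have hset : ({f 0, f 1, f 2, f 3, g 0, g 1, g 2, g 3} : Set (MvPolynomial (ZMod 6) ℂ)) =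
      Set.range ![f 0, f 1, f 2, f 3, g 0, g 1, g 2, g 3] := by
    simp only [Matrix.range_cons, Matrix.range_empty, Set.union_empty, Set.singleton_union]
  change invariantCubics ζ = _ ∧ _ ∧ Module.finrank ℂ (invariantCubics ζ) = 8
  rw [hset, hbasis, span_orbitSum_cubicOrbitRep hζ]
  exact ⟨rfl, linearIndependent_orbitSum_cubicOrbitRep, finrank_invariantCubics hζ⟩
end

section
/- Let ζ ∈ ℂ be a primitive 6th root of unity and consider ℂ[x_0, …, x_5] with variables indexed by ℤ/6. Define f_0 = x_0³ + x_2³ + x_4³, f_1 = x_1²x_4 + x_3²x_0 + x_5²x_2, f_2 = x_1x_2x_3 + x_3x_4x_5 + x_5x_0x_1, f_3 = x_0x_2x_4, and let g_i be obtained from f_i by the substitution x_j ↦ x_{j+1} (indices mod 6). Then for each i ∈ {0, 1, 2, 3}, the 2-dimensional ℂ-subspace spanned by {f_i, g_i} is stable under both substitutions σ : x_j ↦ x_{j+1} and τ : x_j ↦ ζ^j x_j; that is, applying σ or τ to f_i or to g_i yields a ℂ-linear combination of f_i and g_i. -/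
open MvPolynomial

/-- With `f₀,…,f₃` the explicit Heisenberg-invariant cubics in `ℂ[x₀,…,x₅]`
(variables indexed by `ℤ/6`) and `g_i = σ f_i` (σ the shift `x_j ↦ x_{j+1}`), each
2-dimensional subspace `span{f_i, g_i}` is stable under both Heisenberg substitutions
`σ : x_j ↦ x_{j+1}` and `τ : x_j ↦ ζ^j x_j`. -/
theorem stmt_11 (ζ : ℂ) (hζ : IsPrimitiveRoot ζ 6)
    (σ τ : MvPolynomial (ZMod 6) ℂ →ₐ[ℂ] MvPolynomial (ZMod 6) ℂ)
    (hσ : σ = rename (fun j : ZMod 6 => j + 1))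
    (hτ : τ = aeval (fun j : ZMod 6 => (ζ ^ j.val) • X j))
    (f g : Fin 4 → MvPolynomial (ZMod 6) ℂ)
    (hf0 : f 0 = X 0 ^ 3 + X 2 ^ 3 + X 4 ^ 3)
    (hf1 : f 1 = X 1 ^ 2 * X 4 + X 3 ^ 2 * X 0 + X 5 ^ 2 * X 2)
    (hf2 : f 2 = X 1 * X 2 * X 3 + X 3 * X 4 * X 5 + X 5 * X 0 * X 1)
    (hf3 : f 3 = X 0 * X 2 * X 4)
    (hg : ∀ i, g i = σ (f i)) :
    ∀ i : Fin 4,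
      σ (f i) ∈ Submodule.span ℂ {f i, g i} ∧
      σ (g i) ∈ Submodule.span ℂ {f i, g i} ∧
      τ (f i) ∈ Submodule.span ℂ {f i, g i} ∧
      τ (g i) ∈ Submodule.span ℂ {f i, g i} := by
  have h6 : ζ ^ 6 = 1 := hζ.pow_eq_one
  have h3 : ζ ^ 3 = -1 := by
    have h3' : ζ ^ 3 ≠ 1 := hζ.pow_ne_one_of_pos_of_lt (by norm_num) (by norm_num)
    have hm : (ζ ^ 3 - 1) * (ζ ^ 3 + 1) = 0 := by linear_combination h6
    rcases mul_eq_zero.mp hm with h | h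
    · exact absurd (by linear_combination h) h3'
    · linear_combination h
  have h9 : ζ ^ 9 = -1 := by rw [show 9 = 3 * 3 from rfl, pow_mul, h3]; ring
  have h12 : ζ ^ 12 = 1 := by rw [show 12 = 6 * 2 from rfl, pow_mul, h6]; ring
  have h15 : ζ ^ 15 = -1 := by rw [show 15 = 3 * 5 from rfl, pow_mul, h3]; ring
  subst hσ hτ
  have z0 : (0 : ZMod 6) + 1 = 1 := by decide
  have z1 : (1 : ZMod 6) + 1 = 2 := by decide
  have z2 : (2 : ZMod 6) + 1 = 3 := by decide
  have z3 : (3 : ZMod 6) + 1 = 4 := by decide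
  have z4 : (4 : ZMod 6) + 1 = 5 := by decide
  have z5 : (5 : ZMod 6) + 1 = 0 := by decide
  have v0 : ((0 : ZMod 6)).val = 0 := rfl
  have v1 : ((1 : ZMod 6)).val = 1 := rfl
  have v2 : ((2 : ZMod 6)).val = 2 := rfl
  have v3 : ((3 : ZMod 6)).val = 3 := rfl
  have v4 : ((4 : ZMod 6)).val = 4 := rfl
  have v5 : ((5 : ZMod 6)).val = 5 := rfl
  have hg0 : g 0 = X 1 ^ 3 + X 3 ^ 3 + X 5 ^ 3 := by
    rw [hg, hf0]; simp only [map_add, map_mul, map_pow, rename_X, z0, z1, z2, z3, z4, z5]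
  have hg1 : g 1 = X 2 ^ 2 * X 5 + X 4 ^ 2 * X 1 + X 0 ^ 2 * X 3 := by
    rw [hg, hf1]; simp only [map_add, map_mul, map_pow, rename_X, z0, z1, z2, z3, z4, z5]
  have hg2 : g 2 = X 2 * X 3 * X 4 + X 4 * X 5 * X 0 + X 0 * X 1 * X 2 := by
    rw [hg, hf2]; simp only [map_add, map_mul, map_pow, rename_X, z0, z1, z2, z3, z4, z5]
  have hg3 : g 3 = X 1 * X 3 * X 5 := by
    rw [hg, hf3]; simp only [map_add, map_mul, map_pow, rename_X, z0, z1, z2, z3, z4, z5]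
  have key : ∀ i : Fin 4,
      (rename (fun j : ZMod 6 => j + 1)) (g i) = f i ∧
      (aeval (fun j : ZMod 6 => (ζ ^ j.val) • X j)) (f i) = f i ∧
      (aeval (fun j : ZMod 6 => (ζ ^ j.val) • X j)) (g i) = -(g i) := by
    intro i
    match i with
    | 0 =>
      refine ⟨?_, ?_, ?_⟩
      · rw [hg0, hf0]
        simp only [map_add, map_mul, map_pow, rename_X, z0, z1, z2, z3, z4, z5]; ring
      · rw [hf0]
        simp only [map_add, map_mul, map_pow, aeval_X, smul_pow, smul_mul_smul_comm,
          smul_smul, ← pow_mul, ← pow_add]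
        norm_num [v0, v1, v2, v3, v4, v5, h6, h12]
      · rw [hg0]
        simp only [map_add, map_mul, map_pow, aeval_X, smul_pow, smul_mul_smul_comm,
          smul_smul, ← pow_mul, ← pow_add]
        norm_num [v0, v1, v2, v3, v4, v5, h3, h9, h15] <;> ring
    | 1 =>
      refine ⟨?_, ?_, ?_⟩
      · rw [hg1, hf1]
        simp only [map_add, map_mul, map_pow, rename_X, z0, z1, z2, z3, z4, z5]; ring
      · rw [hf1]
        simp only [map_add, map_mul, map_pow, aeval_X, smul_pow, smul_mul_smul_comm,
          smul_smul, ← pow_mul, ← pow_add]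
        norm_num [v0, v1, v2, v3, v4, v5, h6, h12]
      · rw [hg1]
        simp only [map_add, map_mul, map_pow, aeval_X, smul_pow, smul_mul_smul_comm,
          smul_smul, ← pow_mul, ← pow_add]
        norm_num [v0, v1, v2, v3, v4, v5, h3, h9, h15] <;> ring
    | 2 =>
      refine ⟨?_, ?_, ?_⟩
      · rw [hg2, hf2]
        simp only [map_add, map_mul, map_pow, rename_X, z0, z1, z2, z3, z4, z5]; ring
      · rw [hf2]
        simp only [map_add, map_mul, map_pow, aeval_X, smul_pow, smul_mul_smul_comm,
          smul_smul, ← pow_mul, ← pow_add]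
        norm_num [v0, v1, v2, v3, v4, v5, h6, h12]
      · rw [hg2]
        simp only [map_add, map_mul, map_pow, aeval_X, smul_pow, smul_mul_smul_comm,
          smul_smul, ← pow_mul, ← pow_add]
        norm_num [v0, v1, v2, v3, v4, v5, h3, h9, h15] <;> ring
    | 3 =>
      refine ⟨?_, ?_, ?_⟩
      · rw [hg3, hf3]
        simp only [map_add, map_mul, map_pow, rename_X, z0, z1, z2, z3, z4, z5]; ring
      · rw [hf3]
        simp only [map_add, map_mul, map_pow, aeval_X, smul_pow, smul_mul_smul_comm,
          smul_smul, ← pow_mul, ← pow_add]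
        norm_num [v0, v1, v2, v3, v4, v5, h6, h12]
      · rw [hg3]
        simp only [map_add, map_mul, map_pow, aeval_X, smul_pow, smul_mul_smul_comm,
          smul_smul, ← pow_mul, ← pow_add]
        norm_num [v0, v1, v2, v3, v4, v5, h3, h9, h15] <;> ring
  intro i
  have hfmem : f i ∈ Submodule.span ℂ {f i, g i} := Submodule.subset_span (by simp)
  have hgmem : g i ∈ Submodule.span ℂ {f i, g i} := Submodule.subset_span (by simp)
  obtain ⟨e1, e2, e3⟩ := key i
  refine ⟨?_, ?_, ?_, ?_⟩
  · rw [← hg i]; exact hgmem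
  · rw [e1]; exact hfmem
  · rw [e2]; exact hfmem
  · rw [e3]; exact neg_mem hgmem
end
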